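/- Let A be a real n×n matrix, B a real n×m matrix, X a real n×N matrix, U a real m×N matrix, and X′ := A·X + B·U. Let Q be a real N×n matrix such that P := X·Q is symmetric positive definite and the 2n×2n symmetric block matrix [[X·Q, X′·Q], [(X′·Q)ᵀ, X·Q]] is positive definite. Then, with K := U·Q·(X·Q)⁻¹ and M := A + B·K, the matrix M·P·Mᵀ − P is negative definite; in particular every complex eigenvalue of A + B·K has modulus strictly less than 1, so the feedback gain K stabilizes the discrete-time system x′ = Ax + Bu. -/

import Mathlib

/-!
Since `X * Q` is invertible, the closed loop `M = A + B * (U * Q * (X * Q)⁻¹)` satisfies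
`M * (X * Q) = (A * X + B * U) * Q`, so the Schur complement of the lower-right block of the LMI is
exactly `P - M * P * Mᵀ` with `P = X * Q`: the LMI says that `P` is a Lyapunov matrix for `M`.
For a left eigenvector `v` of `M` with eigenvalue `μ`, the Lyapunov form evaluates to
`(1 - ‖μ‖²) * (v* P v)`, which forces `‖μ‖ < 1`; the real Lyapunov inequality transfers to `ℂ`
because a real positive definite matrix stays positive definite over `ℂ`.
-/

open Matrix
open scoped ComplexOrder

namespace Matrix

variable {n : Type*} [Fintype n]

theorem PosDef.schur_complement_fromBlocks₂₂ {m R : Type*} [Fintype m] [CommRing R]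
    [PartialOrder R] [StarRing R] [DecidableEq n] {A : Matrix m m R} {B : Matrix m n R}
    {D : Matrix n n R} [Invertible D] (hD : D.IsHermitian) (h : (fromBlocks A B Bᴴ D).PosDef) :
    (A - B * D⁻¹ * Bᴴ).PosDef := by
  refine .of_dotProduct_mulVec_pos ?_ fun x hx => ?_
  · have hA : A.IsHermitian := (isHermitian_fromBlocks_iff.mp h.isHermitian).1
    simp [IsHermitian, conjTranspose_nonsing_inv, hA.eq, hD.eq, Matrix.mul_assoc]
  · have hxy : x ⊕ᵥ -((D⁻¹ * Bᴴ) *ᵥ x) ≠ 0 := fun h0 => hx (funext fun i => congrFun h0 (.inl i))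
    have := h.dotProduct_mulVec_pos hxy
    rwa [dotProduct_mulVec, schur_complement_eq₂₂ A B _ _ hD, add_neg_cancel, dotProduct_zero,
      zero_add, ← dotProduct_mulVec] at this

theorem mul_nonsing_inv_mul_conjTranspose_of_mul_eq {R : Type*} [CommRing R] [StarRing R]
    [DecidableEq n] {M P F : Matrix n n R} (hP : P.IsHermitian) (hdet : IsUnit P.det)
    (hMP : M * P = F) : F * P⁻¹ * Fᴴ = M * P * Mᴴ := by
  rw [← hMP, conjTranspose_mul, hP.eq, mul_nonsing_inv_cancel_right _ _ hdet, Matrix.mul_assoc]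

theorem exists_mulVec_eq_smul_of_isRoot_charpoly {K : Type*} [Field K] [DecidableEq n]
    {M : Matrix n n K} {μ : K} (h : M.charpoly.IsRoot μ) : ∃ v ≠ 0, M *ᵥ v = μ • v := by
  rw [← charpoly_toLin', ← Module.End.hasEigenvalue_iff_isRoot_charpoly] at h
  obtain ⟨v, hv⟩ := h.exists_hasEigenvector
  exact ⟨v, hv.2, hv.apply_eq_smul⟩

theorem star_dotProduct_mul_mul_conjTranspose_mulVec {R : Type*} [CommSemiring R] [StarRing R]
    (M P : Matrix n n R) (v : n → R) :
    star v ⬝ᵥ (M * P * Mᴴ) *ᵥ v = star (Mᴴ *ᵥ v) ⬝ᵥ P *ᵥ (Mᴴ *ᵥ v) := by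
  rw [star_mulVec, conjTranspose_conjTranspose, ← mulVec_mulVec, ← mulVec_mulVec,
    dotProduct_mulVec]

theorem norm_lt_one_of_posDef_sub_mul_mul_conjTranspose {𝕜 : Type*} [RCLike 𝕜] [DecidableEq n]
    {M P : Matrix n n 𝕜} (hP : P.PosDef) (hL : (P - M * P * Mᴴ).PosDef) {μ : 𝕜}
    (hμ : M.charpoly.IsRoot μ) : ‖μ‖ < 1 := by
  obtain ⟨w, hw, hMw⟩ := exists_mulVec_eq_smul_of_isRoot_charpoly (M := Mᵀ)
    (by rwa [charpoly_transpose])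
  set v := star w
  have hv : v ≠ 0 := by simpa [v] using hw
  have hMv : Mᴴ *ᵥ v = star μ • v := by
    have h := congrArg star hMw
    rwa [star_mulVec, star_smul, conjTranspose_transpose_eq_transpose_conjTranspose,
      vecMul_transpose] at h
  have hform : star v ⬝ᵥ (P - M * P * Mᴴ) *ᵥ v =
      ((1 - ‖μ‖ ^ 2 : ℝ) : 𝕜) * (star v ⬝ᵥ P *ᵥ v) := by
    rw [sub_mulVec, dotProduct_sub, star_dotProduct_mul_mul_conjTranspose_mulVec, hMv]
    simp only [star_smul, mulVec_smul, smul_dotProduct, dotProduct_smul, smul_eq_mul]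
    rw [star_star μ, ← mul_assoc, RCLike.star_def, RCLike.conj_mul]
    push_cast
    ring
  have hpos := hL.dotProduct_mulVec_pos hv
  rw [hform] at hpos
  have hsq : ‖μ‖ ^ 2 < 1 :=
    sub_pos.mp (RCLike.ofReal_pos.mp (pos_of_mul_pos_left hpos (hP.dotProduct_mulVec_pos hv).le))
  exact (pow_lt_one_iff_of_nonneg (norm_nonneg μ) two_ne_zero).mp hsq

theorem re_star_dotProduct_map_ofReal_mulVec (P : Matrix n n ℝ) (z : n → ℂ) :
    (star z ⬝ᵥ P.map Complex.ofReal *ᵥ z).re =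
      (fun i => (z i).re) ⬝ᵥ P *ᵥ (fun i => (z i).re) +
        (fun i => (z i).im) ⬝ᵥ P *ᵥ (fun i => (z i).im) := by
  simp only [dotProduct, mulVec, map_apply, Pi.star_apply, RCLike.star_def, Complex.re_sum,
    Finset.mul_sum, ← Finset.sum_add_distrib]
  refine Finset.sum_congr rfl fun i _ => Finset.sum_congr rfl fun j _ => ?_
  simp only [Complex.mul_re, Complex.mul_im, Complex.conj_re, Complex.conj_im, Complex.ofReal_re,
    Complex.ofReal_im]
  ring

theorem PosDef.map_ofReal {P : Matrix n n ℝ} (hP : P.PosDef) :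
    (P.map Complex.ofReal).PosDef := by
  have hPc : (P.map Complex.ofReal).IsHermitian := hP.isHermitian.map _ fun _ => by simp
  refine .of_dotProduct_mulVec_pos hPc fun z hz =>
    RCLike.pos_iff.mpr ⟨?_, hPc.im_star_dotProduct_mulVec_self z⟩
  have hquad (x : n → ℝ) : x ≠ 0 → 0 < x ⬝ᵥ P *ᵥ x := fun hx => by
    simpa using hP.dotProduct_mulVec_pos hx
  have hquad' (x : n → ℝ) : 0 ≤ x ⬝ᵥ P *ᵥ x := by
    simpa using hP.posSemidef.dotProduct_mulVec_nonneg x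
  change 0 < (star z ⬝ᵥ P.map Complex.ofReal *ᵥ z).re
  rw [re_star_dotProduct_map_ofReal_mulVec]
  by_cases hre : (fun i => (z i).re) = 0
  · have him : (fun i => (z i).im) ≠ 0 := fun him =>
      hz (funext fun i => Complex.ext (congrFun hre i) (congrFun him i))
    exact add_pos_of_nonneg_of_pos (hquad' _) (hquad _ him)
  · exact add_pos_of_pos_of_nonneg (hquad _ hre) (hquad' _)

theorem closedLoop_mul_eq {m N R : Type*} [Fintype m] [Fintype N] [DecidableEq n] [CommRing R]
    (A : Matrix n n R) (B : Matrix n m R) (X : Matrix n N R) (U : Matrix m N R)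
    (Q : Matrix N n R) (hdet : IsUnit (X * Q).det) :
    (A + B * (U * Q * (X * Q)⁻¹)) * (X * Q) = (A * X + B * U) * Q := by
  rw [Matrix.add_mul, Matrix.mul_assoc B, nonsing_inv_mul_cancel_right _ _ hdet, Matrix.add_mul,
    Matrix.mul_assoc, Matrix.mul_assoc]

end Matrix

theorem de_persis_tesi_stabilization {n m N : ℕ}
    (A : Matrix (Fin n) (Fin n) ℝ) (B : Matrix (Fin n) (Fin m) ℝ)
    (X : Matrix (Fin n) (Fin N) ℝ) (U : Matrix (Fin m) (Fin N) ℝ)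
    (Q : Matrix (Fin N) (Fin n) ℝ)
    (hPsymm : (X * Q)ᵀ = X * Q)
    (hPpos : ∀ v : Fin n → ℝ, v ≠ 0 → 0 < v ⬝ᵥ (X * Q).mulVec v)
    (hLMI : ∀ v : (Fin n ⊕ Fin n) → ℝ, v ≠ 0 →
      0 < v ⬝ᵥ (Matrix.fromBlocks (X * Q) ((A * X + B * U) * Q)
        ((A * X + B * U) * Q)ᵀ (X * Q)).mulVec v) :
    (∀ v : Fin n → ℝ, v ≠ 0 →
      v ⬝ᵥ ((A + B * (U * Q * (X * Q)⁻¹)) * (X * Q) * (A + B * (U * Q * (X * Q)⁻¹))ᵀ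
        - X * Q).mulVec v < 0) ∧
    (∀ μ : ℂ, ((A + B * (U * Q * (X * Q)⁻¹)).map Complex.ofReal).charpoly.IsRoot μ →
      ‖μ‖ < 1) := by
  set P := X * Q
  set F := (A * X + B * U) * Q
  set M := A + B * (U * Q * P⁻¹)
  have hPh : P.IsHermitian := by simpa [IsHermitian] using hPsymm
  have hP : P.PosDef := .of_dotProduct_mulVec_pos hPh (by simpa using hPpos)
  have hLMI' : (fromBlocks P F Fᴴ P).PosDef :=
    .of_dotProduct_mulVec_pos (hPh.fromBlocks rfl hPh) (by simpa using hLMI)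
  have hdet : IsUnit P.det := (isUnit_iff_isUnit_det P).mp hP.isUnit
  have : Invertible P := hP.isUnit.invertible
  have hLyap : (P - M * P * Mᴴ).PosDef := by
    rw [← mul_nonsing_inv_mul_conjTranspose_of_mul_eq hPh hdet (closedLoop_mul_eq A B X U Q hdet)]
    exact hLMI'.schur_complement_fromBlocks₂₂ hPh
  refine ⟨fun v hv => ?_, fun μ hμ => ?_⟩
  · have hpos := hLyap.dotProduct_mulVec_pos hv
    simp only [star_trivial, conjTranspose_eq_transpose_of_trivial, sub_mulVec,
      dotProduct_sub] at hpos ⊢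
    linarith
  · refine norm_lt_one_of_posDef_sub_mul_mul_conjTranspose hP.map_ofReal ?_ hμ
    have hmap : (P - M * P * Mᴴ).map Complex.ofReal = P.map Complex.ofReal -
        M.map Complex.ofReal * P.map Complex.ofReal * (M.map Complex.ofReal)ᴴ := by
      ext i j
      simp [mul_apply]
    exact hmap ▸ hLyap.map_ofReal
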